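/- Let R be a UFD and A, B finitely presented torsion R-modules. Then ord(A ⊕ B) = ord(A) · ord(B) up to units in R. -/

import Mathlib

section Aux

theorem aux_det_zero_block {R : Type*} [CommRing R] {n : Type*} [DecidableEq n] [Fintype n]
    (M : Matrix n n R) (A B : Finset n)
    (h0 : ∀ i ∈ A, ∀ j ∈ B, M i j = 0) (hc : Fintype.card n < A.card + B.card) :
    M.det = 0 := by
  rw [Matrix.det_apply']
  refine Finset.sum_eq_zero fun σ _ => ?_
  obtain ⟨j, hjB, hjA⟩ : ∃ j ∈ B, σ j ∈ A := by
    by_contra h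
    push_neg at h
    have hsub : B.image σ ⊆ Aᶜ := by
      intro x hx
      obtain ⟨j, hj, rfl⟩ := Finset.mem_image.mp hx
      simpa using h j hj
    have h1 := Finset.card_le_card hsub
    have h2 : A.card ≤ Fintype.card n := by simpa using A.card_le_univ
    rw [Finset.card_image_of_injective _ σ.injective, Finset.card_compl] at h1
    omega
  exact mul_eq_zero_of_right _ (Finset.prod_eq_zero (Finset.mem_univ j) (h0 _ hjA _ hjB))

theorem aux_gcd_equiv {α : Type*} [CommMonoidWithZero α] [IsCancelMulZero α] [NormalizedGCDMonoid α]
    {ι κ : Type*} [Fintype ι] [Fintype κ] [DecidableEq ι] (g : ι → α) (ψ : κ ≃ ι) :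
    Finset.univ.gcd (g ∘ ψ) = Finset.univ.gcd g := by
  rw [← Finset.gcd_image (g := ψ) Finset.univ, Finset.image_univ_equiv]

theorem aux_gcd_prod {α : Type*} [CommMonoidWithZero α] [IsCancelMulZero α] [NormalizedGCDMonoid α]
    {ι κ : Type*} [Fintype ι] [Fintype κ] (f : ι → α) (g : κ → α) :
    Associated (Finset.univ.gcd (fun p : ι × κ => f p.1 * g p.2))
      (Finset.univ.gcd f * Finset.univ.gcd g) := by
  apply associated_of_dvd_dvd
  · have key : ∀ x : ι, Finset.univ.gcd (fun p : ι × κ => f p.1 * g p.2)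
        ∣ f x * Finset.univ.gcd g := by
      intro x
      have h1 : Finset.univ.gcd (fun p : ι × κ => f p.1 * g p.2)
          ∣ Finset.univ.gcd (fun y : κ => f x * g y) :=
        Finset.dvd_gcd fun y _ => Finset.gcd_dvd (Finset.mem_univ (x, y))
      replace h1 : _ ∣ normalize (f x) * Finset.univ.gcd g := h1.trans ((Finset.gcd_mul_left' _ _ (f x)).dvd.trans
        (mul_dvd_mul_right (normalize_associated (f x)).symm.dvd _))
      exact h1.trans (mul_dvd_mul_right (normalize_dvd_iff.mpr dvd_rfl) _)
    have h2 : Finset.univ.gcd (fun p : ι × κ => f p.1 * g p.2)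
        ∣ Finset.univ.gcd (fun x : ι => Finset.univ.gcd g * f x) :=
      Finset.dvd_gcd fun x _ => (key x).trans (dvd_of_eq (mul_comm _ _))
    replace h2 : _ ∣ normalize (Finset.univ.gcd g) * Finset.univ.gcd f := h2.trans ((Finset.gcd_mul_left' _ _ _).dvd.trans
      (mul_dvd_mul_right (normalize_associated _).symm.dvd _))
    refine h2.trans ?_
    rw [mul_comm]
    exact mul_dvd_mul_left _ (normalize_dvd_iff.mpr dvd_rfl)
  · refine Finset.dvd_gcd fun p _ => ?_
    exact mul_dvd_mul (Finset.gcd_dvd (Finset.mem_univ _)) (Finset.gcd_dvd (Finset.mem_univ _))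

theorem aux_det_sumMap {R : Type*} [CommRing R] {s₁ s₂ r₁ r₂ : ℕ}
    (S₁ : Matrix (Fin s₁) (Fin r₁) R) (S₂ : Matrix (Fin s₂) (Fin r₂) R)
    (d₁ : Fin s₁ ↪ Fin r₁) (d₂ : Fin s₂ ↪ Fin r₂) :
    ((Matrix.fromBlocks S₁ 0 0 S₂).submatrix id (d₁.sumMap d₂)).det
      = (S₁.submatrix id d₁).det * (S₂.submatrix id d₂).det := by
  have h : (Matrix.fromBlocks S₁ 0 0 S₂).submatrix id (d₁.sumMap d₂)
      = Matrix.fromBlocks (S₁.submatrix id d₁) 0 0 (S₂.submatrix id d₂) := by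
    ext i j
    cases i <;> cases j <;> rfl
  rw [h, Matrix.det_fromBlocks_zero₂₁]

theorem aux_det_unbalanced {R : Type*} [CommRing R] {s₁ s₂ r₁ r₂ : ℕ}
    (S₁ : Matrix (Fin s₁) (Fin r₁) R) (S₂ : Matrix (Fin s₂) (Fin r₂) R)
    (d : Fin s₁ ⊕ Fin s₂ ↪ Fin r₁ ⊕ Fin r₂)
    (hT : (Finset.univ.filter fun k => (d k).isLeft).card ≠ s₁) :
    ((Matrix.fromBlocks S₁ 0 0 S₂).submatrix id d).det = 0 := by
  set T := Finset.univ.filter fun k : Fin s₁ ⊕ Fin s₂ => (d k).isLeft with hTdef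
  have hcardn : Fintype.card (Fin s₁ ⊕ Fin s₂) = s₁ + s₂ := by simp
  have hsplit : T.card + (Finset.univ.filter fun k : Fin s₁ ⊕ Fin s₂ => ¬ (d k).isLeft).card
      = s₁ + s₂ := by
    rw [Finset.card_filter_add_card_filter_not]
    simp
  rcases lt_or_gt_of_ne hT with h | h
  · refine aux_det_zero_block _ (Finset.univ.image Sum.inl)
      (Finset.univ.filter fun k => ¬ (d k).isLeft) ?_ ?_
    · intro i hi j hj
      obtain ⟨a, _, rfl⟩ := Finset.mem_image.mp hi
      have hdj : (d j).isRight := by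
        have := (Finset.mem_filter.mp hj).2
        rwa [Sum.not_isLeft] at this
      obtain ⟨b, hb⟩ := Sum.isRight_iff.mp hdj
      simp [Matrix.submatrix_apply, hb, Matrix.fromBlocks]
    · rw [hcardn, Finset.card_image_of_injective _ Sum.inl_injective, Finset.card_univ,
        Fintype.card_fin]
      omega
  · refine aux_det_zero_block _ (Finset.univ.image Sum.inr) T ?_ ?_
    · intro i hi j hj
      obtain ⟨a, _, rfl⟩ := Finset.mem_image.mp hi
      have hdj := (Finset.mem_filter.mp hj).2
      obtain ⟨b, hb⟩ := Sum.isLeft_iff.mp hdj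
      simp [Matrix.submatrix_apply, hb, Matrix.fromBlocks]
    · rw [hcardn, Finset.card_image_of_injective _ Sum.inr_injective, Finset.card_univ,
        Fintype.card_fin]
      omega

theorem aux_balanced {s₁ s₂ r₁ r₂ : ℕ}
    (d : Fin s₁ ⊕ Fin s₂ ↪ Fin r₁ ⊕ Fin r₂)
    (hT : (Finset.univ.filter fun k => (d k).isLeft).card = s₁) :
    ∃ (σ : Equiv.Perm (Fin s₁ ⊕ Fin s₂)) (d₁ : Fin s₁ ↪ Fin r₁) (d₂ : Fin s₂ ↪ Fin r₂),
      ∀ k, d (σ k) = Sum.map d₁ d₂ k := by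
  have h1 : Fintype.card {k : Fin s₁ ⊕ Fin s₂ // (d k).isLeft} = s₁ := by
    rw [Fintype.card_subtype]; exact hT
  have h2 : Fintype.card {k : Fin s₁ ⊕ Fin s₂ // ¬ (d k).isLeft} = s₂ := by
    rw [Fintype.card_subtype_compl, h1]
    simp
  let e₁ : Fin s₁ ≃ {k : Fin s₁ ⊕ Fin s₂ // (d k).isLeft} := (Fintype.equivFinOfCardEq h1).symm
  let e₂ : Fin s₂ ≃ {k : Fin s₁ ⊕ Fin s₂ // ¬ (d k).isLeft} := (Fintype.equivFinOfCardEq h2).symm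
  let σ : Equiv.Perm (Fin s₁ ⊕ Fin s₂) :=
    (Equiv.sumCongr e₁ e₂).trans (Equiv.sumCompl fun k => (d k).isLeft = true)
  have hσl : ∀ i : Fin s₁, (d (σ (Sum.inl i))).isLeft := fun i => (e₁ i).2
  have hσr : ∀ i : Fin s₂, (d (σ (Sum.inr i))).isRight := fun i => by
    have := (e₂ i).2
    rwa [Sum.not_isLeft] at this
  refine ⟨σ, ⟨fun i => (d (σ (Sum.inl i))).getLeft (hσl i), ?_⟩,
    ⟨fun i => (d (σ (Sum.inr i))).getRight (hσr i), ?_⟩, ?_⟩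
  · intro i i' h
    have h' : d (σ (Sum.inl i)) = d (σ (Sum.inl i')) := by
      rw [← Sum.inl_getLeft _ (hσl i), ← Sum.inl_getLeft _ (hσl i')]
      exact congrArg Sum.inl h
    exact Sum.inl_injective (σ.injective (d.injective h'))
  · intro i i' h
    have h' : d (σ (Sum.inr i)) = d (σ (Sum.inr i')) := by
      rw [← Sum.inr_getRight _ (hσr i), ← Sum.inr_getRight _ (hσr i')]
      exact congrArg Sum.inr h
    exact Sum.inr_injective (σ.injective (d.injective h'))
  · intro k
    cases k with
    | inl i => exact (Sum.inl_getLeft _ (hσl i)).symm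
    | inr i => exact (Sum.inr_getRight _ (hσr i)).symm

set_option maxHeartbeats 1000000 in
theorem aux_gcd_blocks {R : Type*} [CommRing R] [IsDomain R] [NormalizedGCDMonoid R]
    {s₁ s₂ r₁ r₂ : ℕ}
    (S₁ : Matrix (Fin s₁) (Fin r₁) R) (S₂ : Matrix (Fin s₂) (Fin r₂) R) :
    Associated
      (Finset.univ.gcd (fun d : Fin s₁ ⊕ Fin s₂ ↪ Fin r₁ ⊕ Fin r₂ =>
        ((Matrix.fromBlocks S₁ 0 0 S₂).submatrix id d).det))
      ((Finset.univ.gcd fun c : Fin s₁ ↪ Fin r₁ => (S₁.submatrix id c).det) *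
       (Finset.univ.gcd fun c : Fin s₂ ↪ Fin r₂ => (S₂.submatrix id c).det)) := by
  set F := fun d : Fin s₁ ⊕ Fin s₂ ↪ Fin r₁ ⊕ Fin r₂ =>
    ((Matrix.fromBlocks S₁ 0 0 S₂).submatrix id d).det with hF
  have step1 : Associated (Finset.univ.gcd F)
      (Finset.univ.gcd (fun p : (Fin s₁ ↪ Fin r₁) × (Fin s₂ ↪ Fin r₂) =>
        (S₁.submatrix id p.1).det * (S₂.submatrix id p.2).det)) := by
    apply associated_of_dvd_dvd
    · refine Finset.dvd_gcd fun p _ => ?_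
      rw [← aux_det_sumMap S₁ S₂ p.1 p.2]
      exact Finset.gcd_dvd (Finset.mem_univ _)
    · refine Finset.dvd_gcd fun d _ => ?_
      by_cases hT : (Finset.univ.filter fun k => (d k).isLeft).card = s₁
      · obtain ⟨σ, d₁, d₂, heq⟩ := aux_balanced d hT
        have hcomp : (Matrix.fromBlocks S₁ 0 0 S₂).submatrix id (d₁.sumMap d₂)
            = ((Matrix.fromBlocks S₁ 0 0 S₂).submatrix id d).submatrix id σ := by
          ext i j
          simp only [Matrix.submatrix_apply, Matrix.submatrix_submatrix, Function.comp,
            Function.Embedding.coe_sumMap, id_eq]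
          rw [heq j]
        have hsign : ((Equiv.Perm.sign σ : ℤ) : R) * ((Equiv.Perm.sign σ : ℤ) : R) = 1 := by
          rcases Int.units_eq_one_or (Equiv.Perm.sign σ) with h | h <;> rw [h] <;> norm_num
        have hdet : (S₁.submatrix id d₁).det * (S₂.submatrix id d₂).det
            = ((Equiv.Perm.sign σ : ℤ) : R) * F d := by
          rw [← aux_det_sumMap S₁ S₂ d₁ d₂, hcomp, Matrix.det_permute']
        have hFd : F d = ((Equiv.Perm.sign σ : ℤ) : R) *
            ((S₁.submatrix id d₁).det * (S₂.submatrix id d₂).det) := by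
          rw [hdet, ← mul_assoc, hsign, one_mul]
        have : Finset.univ.gcd (fun p : (Fin s₁ ↪ Fin r₁) × (Fin s₂ ↪ Fin r₂) =>
            (S₁.submatrix id p.1).det * (S₂.submatrix id p.2).det)
            ∣ (S₁.submatrix id d₁).det * (S₂.submatrix id d₂).det :=
          Finset.gcd_dvd (Finset.mem_univ (d₁, d₂))
        rw [hFd]
        exact this.mul_left _
      · rw [hF]
        simp only
        rw [aux_det_unbalanced S₁ S₂ d hT]
        exact dvd_zero _
  exact step1.trans (aux_gcd_prod (fun c : Fin s₁ ↪ Fin r₁ => (S₁.submatrix id c).det)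
    (fun c : Fin s₂ ↪ Fin r₂ => (S₂.submatrix id c).det))

open Matrix in

theorem aux_quot_equiv {R : Type*} [CommRing R] {s₁ s₂ r₁ r₂ : ℕ}
    (S₁ : Matrix (Fin s₁) (Fin r₁) R) (S₂ : Matrix (Fin s₂) (Fin r₂) R) :
    Nonempty ((((Fin s₁ → R) ⧸ LinearMap.range (Matrix.toLin' S₁)) ×
       ((Fin s₂ → R) ⧸ LinearMap.range (Matrix.toLin' S₂))) ≃ₗ[R]
      (Fin (s₁ + s₂) → R) ⧸ LinearMap.range (Matrix.toLin'
        ((Matrix.fromBlocks S₁ 0 0 S₂).submatrix finSumFinEquiv.symm finSumFinEquiv.symm))) := by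
  set p₁ := LinearMap.range (Matrix.toLin' S₁) with hp₁
  set p₂ := LinearMap.range (Matrix.toLin' S₂) with hp₂
  set S := (Matrix.fromBlocks S₁ 0 0 S₂).submatrix
    (finSumFinEquiv.symm : Fin (s₁ + s₂) ≃ Fin s₁ ⊕ Fin s₂)
    (finSumFinEquiv.symm : Fin (r₁ + r₂) ≃ Fin r₁ ⊕ Fin r₂) with hSdef
  set L₁ : (Fin (s₁ + s₂) → R) →ₗ[R] (Fin s₁ → R) :=
    LinearMap.funLeft R R (fun i : Fin s₁ => finSumFinEquiv (Sum.inl i)) with hL₁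
  set L₂ : (Fin (s₁ + s₂) → R) →ₗ[R] (Fin s₂ → R) :=
    LinearMap.funLeft R R (fun i : Fin s₂ => finSumFinEquiv (Sum.inr i)) with hL₂
  set f : (Fin (s₁ + s₂) → R) →ₗ[R] (((Fin s₁ → R) ⧸ p₁) × ((Fin s₂ → R) ⧸ p₂)) :=
    (p₁.mkQ.comp L₁).prod (p₂.mkQ.comp L₂) with hf
  have hmv : ∀ y : Fin (r₁ + r₂) → R, Matrix.toLin' S y
      = (Sum.elim (S₁ *ᵥ ((y ∘ finSumFinEquiv) ∘ Sum.inl))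
          (S₂ *ᵥ ((y ∘ finSumFinEquiv) ∘ Sum.inr))) ∘ finSumFinEquiv.symm := by
    intro y
    rw [Matrix.toLin'_apply, hSdef, Matrix.submatrix_mulVec_equiv, Matrix.fromBlocks_mulVec]
    simp
  have hsurj : Function.Surjective f := by
    intro q
    obtain ⟨u, hu⟩ := p₁.mkQ_surjective q.1
    obtain ⟨v, hv⟩ := p₂.mkQ_surjective q.2
    refine ⟨Sum.elim u v ∘ finSumFinEquiv.symm, ?_⟩
    have h1 : L₁ (Sum.elim u v ∘ finSumFinEquiv.symm) = u := by
      funext i; simp [hL₁]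
    have h2 : L₂ (Sum.elim u v ∘ finSumFinEquiv.symm) = v := by
      funext i; simp [hL₂]
    rw [hf]
    ext
    · simpa [h1] using hu
    · simpa [h2] using hv
  have hker : LinearMap.ker f = LinearMap.range (Matrix.toLin' S) := by
    ext x
    rw [LinearMap.mem_ker, hf]
    constructor
    · intro hx
      have hx1 : L₁ x ∈ p₁ := by
        have := congrArg Prod.fst hx
        simpa [Submodule.Quotient.mk_eq_zero] using this
      have hx2 : L₂ x ∈ p₂ := by
        have := congrArg Prod.snd hx
        simpa [Submodule.Quotient.mk_eq_zero] using this
      obtain ⟨y₁, hy₁⟩ := hx1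
      obtain ⟨y₂, hy₂⟩ := hx2
      refine ⟨Sum.elim y₁ y₂ ∘ finSumFinEquiv.symm, ?_⟩
      rw [hmv]
      have hcomp : ((Sum.elim y₁ y₂ ∘ finSumFinEquiv.symm) ∘ finSumFinEquiv) = Sum.elim y₁ y₂ := by
        funext k; simp
      rw [hcomp]
      funext i
      rw [Matrix.toLin'_apply] at hy₁ hy₂
      show Sum.elim (S₁ *ᵥ (Sum.elim y₁ y₂ ∘ Sum.inl)) (S₂ *ᵥ (Sum.elim y₁ y₂ ∘ Sum.inr))
        (finSumFinEquiv.symm i) = x i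
      rcases h : finSumFinEquiv.symm i with a | a
      · have hi : finSumFinEquiv (Sum.inl a) = i := by rw [← h]; simp
        have : (Sum.elim y₁ y₂ ∘ Sum.inl) = y₁ := by funext k; simp
        simp only [Sum.elim_inl, this, hy₁]
        rw [← hi]
        rfl
      · have hi : finSumFinEquiv (Sum.inr a) = i := by rw [← h]; simp
        have : (Sum.elim y₁ y₂ ∘ Sum.inr) = y₂ := by funext k; simp
        simp only [Sum.elim_inr, this, hy₂]
        rw [← hi]
        rfl
    · rintro ⟨y, rfl⟩
      have h1 : L₁ (Matrix.toLin' S y) = S₁ *ᵥ ((y ∘ finSumFinEquiv) ∘ Sum.inl) := by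
        funext i
        rw [hmv]
        show Sum.elim _ _ (finSumFinEquiv.symm (finSumFinEquiv (Sum.inl i))) = _
        simp
      have h2 : L₂ (Matrix.toLin' S y) = S₂ *ᵥ ((y ∘ finSumFinEquiv) ∘ Sum.inr) := by
        funext i
        rw [hmv]
        show Sum.elim _ _ (finSumFinEquiv.symm (finSumFinEquiv (Sum.inr i))) = _
        simp
      ext
      · simp only [LinearMap.prod_apply, LinearMap.comp_apply, Function.prod, Submodule.mkQ_apply,
          Prod.fst_zero, h1, Submodule.Quotient.mk_eq_zero]
        exact ⟨(y ∘ finSumFinEquiv) ∘ Sum.inl, Matrix.toLin'_apply _ _⟩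
      · simp only [LinearMap.prod_apply, LinearMap.comp_apply, Function.prod, Submodule.mkQ_apply,
          Prod.snd_zero, h2, Submodule.Quotient.mk_eq_zero]
        exact ⟨(y ∘ finSumFinEquiv) ∘ Sum.inr, Matrix.toLin'_apply _ _⟩
  exact ⟨((Submodule.quotEquivOfEq _ _ hker.symm).trans
    (f.quotKerEquivOfSurjective hsurj)).symm⟩

end Aux

/-- `a` is an order of the `R`-module `M`: there is a finite presentation
`R^r → R^s → M → 0` with `r ≥ s` given by a matrix `S`, such that `a` is the gcd of the
`s×s` minors of `S`. -/
def IsOrderOf (R : Type*) [CommRing R] [IsDomain R] [NormalizedGCDMonoid R]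
    (M : Type*) [AddCommGroup M] [Module R M] (a : R) : Prop :=
  ∃ (s r : ℕ) (_ : s ≤ r) (S : Matrix (Fin s) (Fin r) R),
    Nonempty (M ≃ₗ[R] ((Fin s → R) ⧸ LinearMap.range (Matrix.toLin' S))) ∧
    a = Finset.univ.gcd (fun c : Fin s ↪ Fin r => (S.submatrix id c).det)

/-- Let `R` be a UFD and `A`, `B` finitely presented torsion `R`-modules. Then
`ord(A ⊕ B) = ord(A) ⬝ ord(B)` up to units in `R`. -/
theorem stmt_12 {R : Type*} [CommRing R] [IsDomain R]
    [UniqueFactorizationMonoid R] [NormalizedGCDMonoid R]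
    (A B : Type*) [AddCommGroup A] [Module R A] [AddCommGroup B] [Module R B]
    (hA : Module.IsTorsion R A) (hB : Module.IsTorsion R B)
    (a b : R) (ha : IsOrderOf R A a) (hb : IsOrderOf R B b) :
    ∃ c : R, IsOrderOf R (A × B) c ∧ Associated c (a * b) := by
  obtain ⟨s₁, r₁, hs₁, S₁, ⟨eA⟩, haeq⟩ := ha
  obtain ⟨s₂, r₂, hs₂, S₂, ⟨eB⟩, hbeq⟩ := hb
  set S : Matrix (Fin (s₁ + s₂)) (Fin (r₁ + r₂)) R :=
    (Matrix.fromBlocks S₁ 0 0 S₂).submatrix finSumFinEquiv.symm finSumFinEquiv.symm with hS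
  refine ⟨Finset.univ.gcd (fun c : Fin (s₁ + s₂) ↪ Fin (r₁ + r₂) => (S.submatrix id c).det),
    ⟨s₁ + s₂, r₁ + r₂, Nat.add_le_add hs₁ hs₂, S, ⟨?_⟩, rfl⟩, ?_⟩
  · -- module equivalence
    exact (eA.prodCongr eB).trans (aux_quot_equiv S₁ S₂).some
  · -- gcd computation
    have hre : (fun c : Fin (s₁ + s₂) ↪ Fin (r₁ + r₂) => (S.submatrix id c).det)
        = (fun d : Fin s₁ ⊕ Fin s₂ ↪ Fin r₁ ⊕ Fin r₂ =>
            ((Matrix.fromBlocks S₁ 0 0 S₂).submatrix id d).det)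
          ∘ (Equiv.embeddingCongr finSumFinEquiv.symm finSumFinEquiv.symm) := by
      funext c
      show _ = ((Matrix.fromBlocks S₁ 0 0 S₂).submatrix id
        (Equiv.embeddingCongr finSumFinEquiv.symm finSumFinEquiv.symm c)).det
      have hsq : S.submatrix id c
          = ((Matrix.fromBlocks S₁ 0 0 S₂).submatrix id
              (Equiv.embeddingCongr finSumFinEquiv.symm finSumFinEquiv.symm c)).submatrix
              finSumFinEquiv.symm finSumFinEquiv.symm := by
        ext i j
        simp [hS, Matrix.submatrix_apply, Equiv.embeddingCongr_apply]
      rw [hsq, Matrix.det_submatrix_equiv_self]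
    rw [hre, aux_gcd_equiv]
    rw [haeq, hbeq]
    exact aux_gcd_blocks S₁ S₂
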